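/- arXiv:1912.12737 — 5 statements merged into one kernel-verified Lean document; each statement's English description precedes it below -/
import Mathlib

section
/- Let $a=\tfrac12\sigma^2$, $b=r-\sigma^2$, $c=2r+\beta-\sigma^2$ with $r\ge 0$, $0<\underline\sigma\le\sigma\le\bar\sigma$ and $\beta\ge\sigma^2$. Define the bilinear form $A(u,v)=\int_0^{x_{\max}}(a x^2 u' + b x u)v'\,dx + \int_0^{x_{\max}} c\,u v\,dx$ on $H^1_{0,\omega}(0,x_{\max})$. Then with $C=\tfrac12\min(\underline\sigma^2, 3r)$ (assume $r>0$), $A(v,v)\ge C\|v\|_{1,\omega}^2$ for all $v\in H^1_{0,\omega}$, where $\|v\|_{1,\omega}^2=\int v^2 + \int x^2 (v')^2$. -/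
open intervalIntegral Set

/-!
Integrating `(x v²/2)' = v²/2 + x v v'` over `[0, xmax]` gives `∫ x v v' = -½ ∫ v²`: the boundary
term vanishes at `xmax` because `v xmax = 0` and at `0` because of the weight `x`. Hence
`A(v,v) = (σ²/2) ∫ x² v'² + (3r/2 + β - σ²/2) ∫ v²`, and both coefficients are at least
`min(σ̲², 3r)/2` since `σ̲ ≤ σ` and `β ≥ σ²`.
-/

lemma integral_mul_mul_deriv_eq {v v' : ℝ → ℝ} {a b : ℝ}
    (hderiv : ∀ x ∈ uIcc a b, HasDerivAt v (v' x) x)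
    (hint1 : IntervalIntegrable (fun x => x * v x * v' x) MeasureTheory.volume a b)
    (hint2 : IntervalIntegrable (fun x => v x ^ 2) MeasureTheory.volume a b) :
    ∫ x in a..b, x * v x * v' x = (b * v b ^ 2 - a * v a ^ 2 - ∫ x in a..b, v x ^ 2) / 2 := by
  have hprim : ∀ x ∈ uIcc a b,
      HasDerivAt (fun x => x * v x ^ 2 / 2) (v x ^ 2 / 2 + x * v x * v' x) x := by
    intro x hx
    refine (((hasDerivAt_id x).mul ((hderiv x hx).pow 2)).div_const 2).congr_deriv ?_
    simp only [id_eq, Pi.pow_apply]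
    ring
  have hftc := integral_eq_sub_of_hasDerivAt hprim ((hint2.div_const 2).add hint1)
  rw [integral_add (hint2.div_const 2) hint1, integral_div] at hftc
  linarith

lemma integral_quadratic_form_eq {L p q c : ℝ} {v v' : ℝ → ℝ}
    (hderiv : ∀ x ∈ uIcc 0 L, HasDerivAt v (v' x) x) (hvL : v L = 0)
    (hint1 : IntervalIntegrable (fun x => x * v x * v' x) MeasureTheory.volume 0 L)
    (hint2 : IntervalIntegrable (fun x => v x ^ 2) MeasureTheory.volume 0 L)
    (hint3 : IntervalIntegrable (fun x => x ^ 2 * v' x ^ 2) MeasureTheory.volume 0 L) :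
    (∫ x in (0:ℝ)..L, (p * x ^ 2 * v' x + q * x * v x) * v' x)
        + (∫ x in (0:ℝ)..L, c * v x ^ 2)
      = p * (∫ x in (0:ℝ)..L, x ^ 2 * v' x ^ 2) + (c - q / 2) * ∫ x in (0:ℝ)..L, v x ^ 2 := by
  have hsplit : ∀ x : ℝ, (p * x ^ 2 * v' x + q * x * v x) * v' x
      = p * (x ^ 2 * v' x ^ 2) + q * (x * v x * v' x) := fun x => by ring
  simp_rw [hsplit]
  rw [integral_add (hint3.const_mul _) (hint1.const_mul _), integral_const_mul,
    integral_const_mul, integral_const_mul, integral_mul_mul_deriv_eq hderiv hint1 hint2, hvL]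
  ring

theorem bilinear_form_coercive_general
    (xmax r σ σlo β : ℝ)
    (hxmax : 0 < xmax)
    (hσlo : 0 < σlo) (hσ1 : σlo ≤ σ) (hβ : σ ^ 2 ≤ β)
    (v v' : ℝ → ℝ)
    (hderiv : ∀ x, HasDerivAt v (v' x) x)
    (hvmax : v xmax = 0)
    (hint1 : IntervalIntegrable (fun x => x * v x * v' x) MeasureTheory.volume 0 xmax)
    (hint2 : IntervalIntegrable (fun x => (v x) ^ 2) MeasureTheory.volume 0 xmax)
    (hint3 : IntervalIntegrable (fun x => x ^ 2 * (v' x) ^ 2) MeasureTheory.volume 0 xmax) :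
    (∫ x in (0:ℝ)..xmax,
        ((σ ^ 2 / 2) * x ^ 2 * v' x + (r - σ ^ 2) * x * v x) * v' x)
      + (∫ x in (0:ℝ)..xmax, (2 * r + β - σ ^ 2) * (v x) ^ 2)
      ≥ (min (σlo ^ 2) (3 * r) / 2) *
        ((∫ x in (0:ℝ)..xmax, (v x) ^ 2)
          + ∫ x in (0:ℝ)..xmax, x ^ 2 * (v' x) ^ 2) := by
  rw [integral_quadratic_form_eq (fun x _ => hderiv x) hvmax hint1 hint2 hint3]
  have hI1 : 0 ≤ ∫ x in (0:ℝ)..xmax, x ^ 2 * v' x ^ 2 :=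
    integral_nonneg hxmax.le fun x _ => by positivity
  have hI2 : 0 ≤ ∫ x in (0:ℝ)..xmax, v x ^ 2 :=
    integral_nonneg hxmax.le fun x _ => by positivity
  have hmσ : min (σlo ^ 2) (3 * r) ≤ σ ^ 2 :=
    (min_le_left _ _).trans (pow_le_pow_left₀ hσlo.le hσ1 2)
  have hmr : min (σlo ^ 2) (3 * r) ≤ 3 * r := min_le_right _ _
  nlinarith [mul_le_mul_of_nonneg_right hmσ hI1, mul_le_mul_of_nonneg_right hmr hI2]

/-- Coercivity of the Black–Scholes bilinear form
`A(u,v) = ∫ (a x² u' + b x u) v' + ∫ c u v` with `a = σ²/2`, `b = r - σ²`,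
`c = 2r + β - σ²`, on `H¹_{0,ω}(0, xmax)`: with `C = (1/2) min(σ̲², 3r)` (and `r > 0`),
`A(v,v) ≥ C ‖v‖²_{1,ω}` where `‖v‖²_{1,ω} = ∫ v² + ∫ x² (v')²`. -/
theorem bilinear_form_coercive
    (xmax r σ σlo σhi β : ℝ)
    (hxmax : 0 < xmax) (hr : 0 < r)
    (hσlo : 0 < σlo) (hσ1 : σlo ≤ σ) (hσ2 : σ ≤ σhi) (hβ : σ ^ 2 ≤ β)
    (v v' : ℝ → ℝ)
    (hderiv : ∀ x, HasDerivAt v (v' x) x)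
    (hv0 : v 0 = 0) (hvmax : v xmax = 0)
    (hint1 : IntervalIntegrable (fun x => x * v x * v' x) MeasureTheory.volume 0 xmax)
    (hint2 : IntervalIntegrable (fun x => (v x) ^ 2) MeasureTheory.volume 0 xmax)
    (hint3 : IntervalIntegrable (fun x => x ^ 2 * (v' x) ^ 2) MeasureTheory.volume 0 xmax) :
    (∫ x in (0:ℝ)..xmax,
        ((σ ^ 2 / 2) * x ^ 2 * v' x + (r - σ ^ 2) * x * v x) * v' x)
      + (∫ x in (0:ℝ)..xmax, (2 * r + β - σ ^ 2) * (v x) ^ 2)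
      ≥ (min (σlo ^ 2) (3 * r) / 2) *
        ((∫ x in (0:ℝ)..xmax, (v x) ^ 2)
          + ∫ x in (0:ℝ)..xmax, x ^ 2 * (v' x) ^ 2) :=
  bilinear_form_coercive_general xmax r σ σlo β hxmax hσlo hσ1 hβ v v' hderiv hvmax hint1 hint2
    hint3
end

section
/- Under local quasi-uniformity ($l_{i+1}/c \le l_i \le c\, l_{i+1}$ for a constant $c>0$) and with grid points contained in $(0,x_{\max}]$, there exists a constant $C_4>0$ depending only on $c$, $\sigma$, $x_{\max}$ and on the ratios $x_{i+1/2}/x_{\max}$, such that the TPFA transmissibility satisfies $1/\tau_{i+1/2} \le C_4\, h_i$ where $h_i = x_{i+1}-x_i$. More precisely, since $l_i \le x_{i+1/2}$ and $l_{i+1}\le x_{i+3/2}$, one has $\frac{1}{\tau_{i+1/2}} \le \frac{6}{\sigma^2 x_{i+1/2}^2}\Big[\frac{l_{i+1}}{1-(x_{i+1/2}/x_{i+3/2})^3} + \frac{l_i}{1-(x_{i-1/2}/x_{i+1/2})^3}\Big]\cdot\frac{x_{i+1/2}^2}{x_{i+1/2}^2}$, i.e., $\frac{1}{\tau_{i+1/2}}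 \le \frac{6}{\sigma^2 x_{i+1/2}^2}\Big[\frac{l_{i+1}}{1-(x_{i+1/2}/x_{i+3/2})^3} + \frac{l_i}{1-(x_{i-1/2}/x_{i+1/2})^3}\Big]$. -/
/-- Lower bound on the TPFA transmissibility (bound on its inverse).  The nodes
`0 < p0 < p1 < p2 < p3 ≤ xmax` are consecutive grid points `x_{i-1}, x_i, x_{i+1},
x_{i+2}`, with interfaces `xa = x_{i-1/2} = (p0+p1)/2`, `xb = x_{i+1/2} = (p1+p2)/2`,
`xc = x_{i+3/2} = (p2+p3)/2`, cell lengths `li = xb - xa`, `lip = xc - xb`, mesh size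
`hi = p2 - p1`, and harmonic-mean transmissibility
`τ = 2 Ti Tip/(Ti+Tip)` where `Ti = (σ²/6)(xb³-xa³)/li²`, `Tip = (σ²/6)(xc³-xb³)/lip²`.
Under the local quasi-uniformity `lip/c ≤ li ≤ c lip` there is `C₄ > 0` with
`1/τ ≤ C₄ hi`, and precisely
`1/τ ≤ 6/(σ² xb²) [lip/(1-(xb/xc)³) + li/(1-(xa/xb)³)]`. -/
theorem tpfa_transmissibility_inverse_bound
    (σ xmax c p0 p1 p2 p3 : ℝ) (hσ : 0 < σ) (hc : 0 < c)
    (hp0 : 0 < p0) (h01 : p0 < p1) (h12 : p1 < p2) (h23 : p2 < p3) (h3x : p3 ≤ xmax)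
    (hqu1 : ((p2 + p3) / 2 - (p1 + p2) / 2) / c ≤ (p1 + p2) / 2 - (p0 + p1) / 2)
    (hqu2 : (p1 + p2) / 2 - (p0 + p1) / 2 ≤ c * ((p2 + p3) / 2 - (p1 + p2) / 2)) :
    (∃ C₄ > (0:ℝ),
      1 / ((2 * ((σ ^ 2 / 6) * (((p1 + p2) / 2) ^ 3 - ((p0 + p1) / 2) ^ 3)
              / ((p1 + p2) / 2 - (p0 + p1) / 2) ^ 2)
            * ((σ ^ 2 / 6) * (((p2 + p3) / 2) ^ 3 - ((p1 + p2) / 2) ^ 3)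
              / ((p2 + p3) / 2 - (p1 + p2) / 2) ^ 2))
          / (((σ ^ 2 / 6) * (((p1 + p2) / 2) ^ 3 - ((p0 + p1) / 2) ^ 3)
              / ((p1 + p2) / 2 - (p0 + p1) / 2) ^ 2)
            + ((σ ^ 2 / 6) * (((p2 + p3) / 2) ^ 3 - ((p1 + p2) / 2) ^ 3)
              / ((p2 + p3) / 2 - (p1 + p2) / 2) ^ 2)))
        ≤ C₄ * (p2 - p1))
    ∧ 1 / ((2 * ((σ ^ 2 / 6) * (((p1 + p2) / 2) ^ 3 - ((p0 + p1) / 2) ^ 3)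
              / ((p1 + p2) / 2 - (p0 + p1) / 2) ^ 2)
            * ((σ ^ 2 / 6) * (((p2 + p3) / 2) ^ 3 - ((p1 + p2) / 2) ^ 3)
              / ((p2 + p3) / 2 - (p1 + p2) / 2) ^ 2))
          / (((σ ^ 2 / 6) * (((p1 + p2) / 2) ^ 3 - ((p0 + p1) / 2) ^ 3)
              / ((p1 + p2) / 2 - (p0 + p1) / 2) ^ 2)
            + ((σ ^ 2 / 6) * (((p2 + p3) / 2) ^ 3 - ((p1 + p2) / 2) ^ 3)
              / ((p2 + p3) / 2 - (p1 + p2) / 2) ^ 2)))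
        ≤ 6 / (σ ^ 2 * ((p1 + p2) / 2) ^ 2)
          * (((p2 + p3) / 2 - (p1 + p2) / 2)
                / (1 - (((p1 + p2) / 2) / ((p2 + p3) / 2)) ^ 3)
              + ((p1 + p2) / 2 - (p0 + p1) / 2)
                / (1 - (((p0 + p1) / 2) / ((p1 + p2) / 2)) ^ 3)) := by
  set xa := (p0 + p1) / 2 with hxa_def
  set xb := (p1 + p2) / 2 with hxb_def
  set xc := (p2 + p3) / 2 with hxc_def
  have hxa : 0 < xa := by rw [hxa_def]; linarith
  have hab : xa < xb := by rw [hxa_def, hxb_def]; linarith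
  have hbc : xb < xc := by rw [hxb_def, hxc_def]; linarith
  have hxb : 0 < xb := hxa.trans hab
  have hxc : 0 < xc := hxb.trans hbc
  have hli : 0 < xb - xa := by linarith
  have hlip : 0 < xc - xb := by linarith
  have hk : (0:ℝ) < σ ^ 2 / 6 := by positivity
  have hcube1 : xa ^ 3 < xb ^ 3 := by
    exact pow_lt_pow_left₀ hab hxa.le (by norm_num)
  have hcube2 : xb ^ 3 < xc ^ 3 := by
    exact pow_lt_pow_left₀ hbc hxb.le (by norm_num)
  clear_value xa xb xc
  set A := (σ ^ 2 / 6) * (xb ^ 3 - xa ^ 3) / (xb - xa) ^ 2 with hA_def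
  set B := (σ ^ 2 / 6) * (xc ^ 3 - xb ^ 3) / (xc - xb) ^ 2 with hB_def
  have hA : 0 < A := by
    rw [hA_def]
    exact div_pos (mul_pos hk (by linarith)) (by positivity)
  have hB : 0 < B := by
    rw [hB_def]
    exact div_pos (mul_pos hk (by linarith)) (by positivity)
  clear_value A B
  have hden1 : (0:ℝ) < σ ^ 2 / 6 * (xb ^ 3 - xa ^ 3) := mul_pos hk (by linarith)
  have hden2 : (0:ℝ) < σ ^ 2 / 6 * (xc ^ 3 - xb ^ 3) := mul_pos hk (by linarith)
  have hD1 : 0 < 1 - (xa / xb) ^ 3 := by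
    have h1 : xa / xb < 1 := (div_lt_one hxb).mpr hab
    have h0 : 0 ≤ xa / xb := by positivity
    nlinarith [pow_lt_one₀ h0 h1 (by norm_num : 3 ≠ 0)]
  have hD2 : 0 < 1 - (xb / xc) ^ 3 := by
    have h1 : xb / xc < 1 := (div_lt_one hxc).mpr hbc
    have h0 : 0 ≤ xb / xc := by positivity
    nlinarith [pow_lt_one₀ h0 h1 (by norm_num : 3 ≠ 0)]
  -- 1/τ = 1/(2A) + 1/(2B)
  have hsplit : 1 / (2 * A * B / (A + B)) = 1 / (2 * A) + 1 / (2 * B) := by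
    field_simp
    ring
  -- bounds on each term
  have hbnd1 : 1 / (2 * B) ≤ 6 / (σ ^ 2 * xb ^ 2) * ((xc - xb) / (1 - (xb / xc) ^ 3)) := by
    have hBval : 1 / B = (xc - xb) ^ 2 / ((σ ^ 2 / 6) * (xc ^ 3 - xb ^ 3)) := by
      rw [hB_def, one_div_div]
    have hRHS : 6 / (σ ^ 2 * xb ^ 2) * ((xc - xb) / (1 - (xb / xc) ^ 3))
        = (xc - xb) * xc ^ 3 / ((σ ^ 2 / 6) * (xc ^ 3 - xb ^ 3) * xb ^ 2) := by
      rw [div_mul_div_comm]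
      rw [div_eq_div_iff (mul_pos (by positivity : (0:ℝ) < σ ^ 2 * xb ^ 2) hD2).ne' (mul_pos hden2 (by positivity : (0:ℝ) < xb ^ 2)).ne']
      field_simp
    have h1 : 1 / (2 * B) ≤ 1 / B :=
      one_div_le_one_div_of_le hB (le_mul_of_one_le_left hB.le one_le_two)
    refine h1.trans ?_
    rw [hBval, hRHS, div_le_div_iff₀ hden2 (mul_pos hden2 (by positivity : (0:ℝ) < xb ^ 2))]
    have hle1 : xc - xb ≤ xc := by linarith
    have hle2 : xb ^ 2 ≤ xc ^ 2 := pow_le_pow_left₀ hxb.le hbc.le 2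
    have h2 : xb ^ 2 * (xc - xb) ≤ xc ^ 2 * xc :=
      mul_le_mul hle2 hle1 hlip.le (by positivity)
    calc (xc - xb) ^ 2 * ((σ ^ 2 / 6) * (xc ^ 3 - xb ^ 3) * xb ^ 2)
        = ((xc - xb) * (xb ^ 2 * (xc - xb))) * ((σ ^ 2 / 6) * (xc ^ 3 - xb ^ 3)) := by ring
      _ ≤ ((xc - xb) * (xc ^ 2 * xc)) * ((σ ^ 2 / 6) * (xc ^ 3 - xb ^ 3)) :=
          mul_le_mul_of_nonneg_right (mul_le_mul_of_nonneg_left h2 hlip.le) hden2.le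
      _ = (xc - xb) * xc ^ 3 * ((σ ^ 2 / 6) * (xc ^ 3 - xb ^ 3)) := by ring
  have hbnd2 : 1 / (2 * A) ≤ 6 / (σ ^ 2 * xb ^ 2) * ((xb - xa) / (1 - (xa / xb) ^ 3)) := by
    have hAval : 1 / A = (xb - xa) ^ 2 / ((σ ^ 2 / 6) * (xb ^ 3 - xa ^ 3)) := by
      rw [hA_def, one_div_div]
    have hRHS : 6 / (σ ^ 2 * xb ^ 2) * ((xb - xa) / (1 - (xa / xb) ^ 3))
        = (xb - xa) * xb ^ 3 / ((σ ^ 2 / 6) * (xb ^ 3 - xa ^ 3) * xb ^ 2) := by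
      rw [div_mul_div_comm]
      rw [div_eq_div_iff (mul_pos (by positivity : (0:ℝ) < σ ^ 2 * xb ^ 2) hD1).ne' (mul_pos hden1 (by positivity : (0:ℝ) < xb ^ 2)).ne']
      field_simp
    have h1 : 1 / (2 * A) ≤ 1 / A :=
      one_div_le_one_div_of_le hA (le_mul_of_one_le_left hA.le one_le_two)
    refine h1.trans ?_
    rw [hAval, hRHS, div_le_div_iff₀ hden1 (mul_pos hden1 (by positivity : (0:ℝ) < xb ^ 2))]
    have hle : xb - xa ≤ xb := by linarith
    have h2 : xb ^ 2 * (xb - xa) ≤ xb ^ 2 * xb :=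
      mul_le_mul_of_nonneg_left hle (by positivity)
    calc (xb - xa) ^ 2 * ((σ ^ 2 / 6) * (xb ^ 3 - xa ^ 3) * xb ^ 2)
        = ((xb - xa) * (xb ^ 2 * (xb - xa))) * ((σ ^ 2 / 6) * (xb ^ 3 - xa ^ 3)) := by ring
      _ ≤ ((xb - xa) * (xb ^ 2 * xb)) * ((σ ^ 2 / 6) * (xb ^ 3 - xa ^ 3)) :=
          mul_le_mul_of_nonneg_right (mul_le_mul_of_nonneg_left h2 hli.le) hden1.le
      _ = (xb - xa) * xb ^ 3 * ((σ ^ 2 / 6) * (xb ^ 3 - xa ^ 3)) := by ring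
  have key : 1 / (2 * A * B / (A + B))
      ≤ 6 / (σ ^ 2 * xb ^ 2) * ((xc - xb) / (1 - (xb / xc) ^ 3)
          + (xb - xa) / (1 - (xa / xb) ^ 3)) := by
    rw [hsplit, mul_add]
    exact add_le_add hbnd2 hbnd1 |>.trans (by rw [add_comm])
  refine ⟨⟨(6 / (σ ^ 2 * xb ^ 2) * ((xc - xb) / (1 - (xb / xc) ^ 3)
      + (xb - xa) / (1 - (xa / xb) ^ 3))) / (p2 - p1), ?_, ?_⟩, key⟩
  · exact div_pos (mul_pos (by positivity : (0:ℝ) < 6 / (σ ^ 2 * xb ^ 2))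
      (add_pos (div_pos hlip hD2) (div_pos hli hD1))) (sub_pos.mpr h12)
  · rw [div_mul_cancel₀ _ (sub_pos.mpr h12).ne']
    exact key
end

section
/- Flux consistency of the fitted flux at the degenerate boundary: with $a=\tfrac12\sigma^2$, $b=r-\sigma^2$, continuous flux $F(\omega)(y)=-a y^2\omega'(y)-by\,\omega(y)$, and the fitted discrete flux $G_h(\omega) = -\tfrac14 x_1(a+b)\omega(x_1)$ at the first interface $x_{1/2}=x_1/2$ (with $x_0=0$ and $\omega(x_0)=0$), there exists a constant $C_2>0$ depending only on $\bar r,\bar\sigma,x_{\max}$ and the mesh regularity constant, such that for all $\omega\in H^2$ with $\omega(0)=0$, $\big|G_h(\omega)-F(\omega)(x_{1/2})\big| \le C_2\int_{x_0}^{x_1}\big(|F(\omega)'|+|\omega'|+|\omega|\big)\,dx$. -/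
/-- Continuous Black–Scholes flux `F(ω)(y) = -a y² ω'(y) - b y ω(y)`. -/
noncomputable def contFluxAB (a b : ℝ) (ω ω' : ℝ → ℝ) (y : ℝ) : ℝ :=
  -a * y ^ 2 * ω' y - b * y * ω y

/-- Flux consistency of the fitted flux at the degenerate boundary.  With
`a = σ²/2`, `b = r - σ²`, continuous flux `F(ω)(y) = -a y² ω'(y) - b y ω(y)`, and the
fitted discrete flux `G_h(ω) = -(1/4) x1 (a+b) ω(x1)` at the first interface
`x_{1/2} = x1/2` (first node `x0 = 0`, `ω(0) = 0`), there is a constant `C₂ > 0`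
depending only on `rbar`, `σhi`, `xmax` (and the coefficient bounds) such that for all
`ω ∈ H²` with `ω(0) = 0`:
`|G_h(ω) - F(ω)(x1/2)| ≤ C₂ ∫_0^{x1} (|F(ω)'| + |ω'| + |ω|)`. -/
theorem fitted_flux_consistency_boundary
    (rbar σlo σhi xmax : ℝ)
    (hrbar : 0 ≤ rbar) (hσlo : 0 < σlo) (hσ : σlo ≤ σhi) (hxmax : 0 < xmax) :
    ∃ C₂ > (0:ℝ), ∀ (r σ : ℝ), 0 ≤ r → r ≤ rbar → σlo ≤ σ → σ ≤ σhi →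
      ∀ (x1 : ℝ), 0 < x1 → x1 ≤ xmax →
        ∀ (ω ω' F' : ℝ → ℝ),
          (∀ y, HasDerivAt ω (ω' y) y) →
          (∀ y, HasDerivAt
              (contFluxAB (σ ^ 2 / 2) (r - σ ^ 2) ω ω') (F' y) y) →
          ω 0 = 0 →
          IntervalIntegrable (fun y => |F' y| + |ω' y| + |ω y|)
            MeasureTheory.volume 0 x1 →
          |(-(1 / 4) * x1 * ((σ ^ 2 / 2) + (r - σ ^ 2)) * ω x1)
              - contFluxAB (σ ^ 2 / 2) (r - σ ^ 2) ω ω' (x1 / 2)|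
            ≤ C₂ * ∫ y in (0:ℝ)..x1, (|F' y| + |ω' y| + |ω y|) := by
  have hσhi : 0 < σhi := hσlo.trans_le hσ
  refine ⟨1/4 * xmax * (rbar + σhi ^ 2 / 2) + 1, by positivity, ?_⟩
  intro r σ hr hrb hσl hσu x1 hx1 hx1m ω ω' F' hω hF hω0 hint
  set a : ℝ := σ ^ 2 / 2 with ha
  set b : ℝ := r - σ ^ 2 with hb
  have hω'eq : ω' = deriv ω := funext fun y => ((hω y).deriv).symm
  have hF'eq : F' = deriv (contFluxAB a b ω ω') := funext fun y => ((hF y).deriv).symm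
  have hωm : Measurable ω' := hω'eq ▸ measurable_deriv ω
  have hFm : Measurable F' := hF'eq ▸ measurable_deriv _
  have habs : ∀ y, 0 ≤ |F' y| + |ω' y| + |ω y| := fun y => by positivity
  have hω'int : IntervalIntegrable ω' MeasureTheory.volume 0 x1 := by
    refine hint.mono_fun hωm.aestronglyMeasurable ?_
    filter_upwards with y
    have h1 := abs_nonneg (F' y); have h2 := abs_nonneg (ω y)
    simp only [Real.norm_eq_abs, abs_of_nonneg (habs y)]
    linarith
  have hF'int1 : IntervalIntegrable F' MeasureTheory.volume 0 x1 := by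
    refine hint.mono_fun hFm.aestronglyMeasurable ?_
    filter_upwards with y
    have h1 := abs_nonneg (ω' y); have h2 := abs_nonneg (ω y)
    simp only [Real.norm_eq_abs, abs_of_nonneg (habs y)]
    linarith
  have hF'int : IntervalIntegrable F' MeasureTheory.volume 0 (x1/2) :=
    hF'int1.mono_set (Set.uIcc_subset_uIcc Set.left_mem_uIcc
      (Set.mem_uIcc.mpr (Or.inl ⟨by linarith, by linarith⟩)))
  have hωx1 : ω x1 = ∫ y in (0:ℝ)..x1, ω' y := by
    rw [intervalIntegral.integral_eq_sub_of_hasDerivAt (fun y _ => hω y) hω'int, hω0, sub_zero]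
  have hF0 : contFluxAB a b ω ω' 0 = 0 := by simp [contFluxAB]
  have hFval : contFluxAB a b ω ω' (x1/2) = ∫ y in (0:ℝ)..(x1/2), F' y := by
    rw [intervalIntegral.integral_eq_sub_of_hasDerivAt (fun y _ => hF y) hF'int, hF0, sub_zero]
  set I : ℝ := ∫ y in (0:ℝ)..x1, (|F' y| + |ω' y| + |ω y|) with hI
  have hInn : 0 ≤ I := intervalIntegral.integral_nonneg hx1.le fun y _ => habs y
  -- bound |ω x1|
  have hωb : |ω x1| ≤ I := by
    rw [hωx1]
    calc |∫ y in (0:ℝ)..x1, ω' y| ≤ ∫ y in (0:ℝ)..x1, |ω' y| :=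
          intervalIntegral.abs_integral_le_integral_abs hx1.le
      _ ≤ I := by
          refine intervalIntegral.integral_mono_on hx1.le hω'int.abs hint fun y _ => ?_
          have h1 := abs_nonneg (F' y); have h2 := abs_nonneg (ω y)
          linarith
  -- bound |F(x1/2)|
  have hFb : |contFluxAB a b ω ω' (x1/2)| ≤ I := by
    rw [hFval]
    calc |∫ y in (0:ℝ)..(x1/2), F' y| ≤ ∫ y in (0:ℝ)..(x1/2), |F' y| :=
          intervalIntegral.abs_integral_le_integral_abs (by linarith)
      _ ≤ ∫ y in (0:ℝ)..x1, |F' y| := by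
          refine intervalIntegral.integral_mono_interval le_rfl (by linarith) (by linarith)
            ?_ hF'int1.abs
          filter_upwards with y using abs_nonneg _
      _ ≤ I := by
          refine intervalIntegral.integral_mono_on hx1.le hF'int1.abs hint fun y _ => ?_
          have h1 := abs_nonneg (ω' y); have h2 := abs_nonneg (ω y)
          linarith
  -- bound |a+b|
  have hσ2 : σ ^ 2 ≤ σhi ^ 2 := by nlinarith
  have hσp : 0 < σ := hσlo.trans_le hσl
  have hσ2' : 0 < σ ^ 2 := by positivity
  have habK : |a + b| ≤ rbar + σhi ^ 2 / 2 := by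
    rw [ha, hb]
    rw [abs_le]
    constructor <;> nlinarith
  have hGb : |(-(1 / 4) * x1 * (a + b) * ω x1)| ≤ 1/4 * xmax * (rbar + σhi ^ 2 / 2) * I := by
    have : |(-(1 / 4) * x1 * (a + b) * ω x1)| = 1/4 * |x1| * |a + b| * |ω x1| := by
      rw [abs_mul, abs_mul, abs_mul, abs_neg]
      norm_num
    rw [this]
    have hx1a : |x1| ≤ xmax := by rw [abs_of_pos hx1]; exact hx1m
    gcongr
  calc |(-(1 / 4) * x1 * (a + b) * ω x1) - contFluxAB a b ω ω' (x1/2)|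
      ≤ |(-(1 / 4) * x1 * (a + b) * ω x1)| + |contFluxAB a b ω ω' (x1/2)| := abs_sub _ _
    _ ≤ 1/4 * xmax * (rbar + σhi ^ 2 / 2) * I + I := add_le_add hGb hFb
    _ = (1/4 * xmax * (rbar + σhi ^ 2 / 2) + 1) * I := by ring
end

section
/- Coercivity of the full TPFA bilinear form: assume positive transmissibilities $\tau_{i+1/2}>0$, cell lengths $l_i>0$, a coefficient $c>0$, any real $b$ split as $b^\pm$, homogeneous boundary values $u_0=u_{N+1}=0$, and $x_{-1/2}=x_{1/2}=0\le x_{3/2}<\cdots$. Then the TPFA bilinear form $a_h(u,u)=a_h^1(u,u)+a_h^2(u,u)+c\sum_{i=1}^N l_i u_i^2$ satisfies $a_h(u,u)\ge \alpha\big(\|u\|_{0,\omega}^2 + \|u\|_{0,h}^2\big)$ with $\alpha=\min(1,c)$, where $\|u\|_{0,\omega}^2=\sum_{i=1}^N\tau_{i+1/2}(u_{i+1}-u_i)^2$ and $\|u\|_{0,h}^2=\sum_{i=1}^N l_i u_i^2$. -/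
open Finset

lemma tele_sum (N : ℕ) (f : ℕ → ℝ) :
    ∑ i ∈ Finset.Icc 1 N, (f i - f (i - 1)) = f N - f 0 := by
  induction N with
  | zero => simp
  | succ n ih =>
    rw [Finset.sum_Icc_succ_top (by omega), ih]
    simp [Nat.add_sub_cancel]

lemma diff_identity (N : ℕ) (τ u : ℕ → ℝ) :
    ∑ i ∈ Finset.Icc 1 N,
        (-(τ i) * (u (i + 1) - u i) + τ (i - 1) * (u i - u (i - 1))) * u i
      = (∑ i ∈ Finset.Icc 1 N, τ i * (u (i + 1) - u i) ^ 2)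
        - τ N * (u (N + 1) - u N) * u (N + 1) + τ 0 * (u 1 - u 0) * u 1 := by
  induction N with
  | zero => simp
  | succ n ih =>
    rw [Finset.sum_Icc_succ_top (by omega), Finset.sum_Icc_succ_top (by omega), ih]
    simp only [Nat.add_sub_cancel]
    ring


/-- Coercivity of the full TPFA bilinear form.  Here `y i` denotes the interface point
`x_{i-1/2}` (so `y 0 = x_{-1/2} = 0`, `y 1 = x_{1/2} = 0`, increasing afterwards),
`l i = x_{i+1/2} - x_{i-1/2} = y (i+1) - y i > 0`, `τ i` denotes the transmissibility
`τ_{i+1/2} > 0`, `c > 0`, `b` is split via `b⁺ = max b 0`, `b⁻ = min b 0`, and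
`u 0 = u (N+1) = 0`.  Then the TPFA form
`a_h(u,u) = a_h¹(u,u) + a_h²(u,u) + c ∑ l_i u_i²` satisfies
`a_h(u,u) ≥ min(1,c) (‖u‖₀ω² + ‖u‖₀h²)` with
`‖u‖₀ω² = ∑_{i=1}^N τ_{i+1/2}(u_{i+1}-u_i)²` and `‖u‖₀h² = ∑_{i=1}^N l_i u_i²`. -/
theorem tpfa_full_coercivity
    (N : ℕ) (b c : ℝ) (hc : 0 < c)
    (y u τ : ℕ → ℝ)
    (hy0 : y 0 = 0) (hy1 : y 1 = 0)
    (hmono : ∀ i ∈ Finset.Icc 1 N, y i < y (i + 1))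
    (hτpos : ∀ i ∈ Finset.Icc 0 N, 0 < τ i)
    (hu0 : u 0 = 0) (huN : u (N + 1) = 0) :
    (∑ i ∈ Finset.Icc 1 N,
        (-(τ i) * (u (i + 1) - u i) + τ (i - 1) * (u i - u (i - 1))) * u i)
      + (∑ i ∈ Finset.Icc 1 N,
          (-(y (i + 1)) * (max b 0 * u (i + 1) + min b 0 * u i)
            + y i * (max b 0 * u (i - 1) + min b 0 * u i)) * u i)
      + c * ∑ i ∈ Finset.Icc 1 N, (y (i + 1) - y i) * (u i) ^ 2
    ≥ min 1 c *
        ((∑ i ∈ Finset.Icc 1 N, τ i * (u (i + 1) - u i) ^ 2)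
          + ∑ i ∈ Finset.Icc 1 N, (y (i + 1) - y i) * (u i) ^ 2) := by
  set Ω := ∑ i ∈ Finset.Icc 1 N, τ i * (u (i + 1) - u i) ^ 2 with hΩdef
  set H := ∑ i ∈ Finset.Icc 1 N, (y (i + 1) - y i) * (u i) ^ 2 with hHdef
  have hΩ : 0 ≤ Ω :=
    Finset.sum_nonneg fun i hi => mul_nonneg
      (le_of_lt (hτpos i (by simp at hi ⊢; omega))) (sq_nonneg _)
  have hH : 0 ≤ H :=
    Finset.sum_nonneg fun i hi => mul_nonneg
      (by linarith [hmono i hi]) (sq_nonneg _)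
  have hτ0 : 0 < τ 0 := hτpos 0 (by simp)
  -- diffusion part
  have hS1 : (∑ i ∈ Finset.Icc 1 N,
        (-(τ i) * (u (i + 1) - u i) + τ (i - 1) * (u i - u (i - 1))) * u i) ≥ Ω := by
    rw [diff_identity, huN, hu0]
    nlinarith [sq_nonneg (u 1)]
  -- convection part
  have hS2 : (∑ i ∈ Finset.Icc 1 N,
          (-(y (i + 1)) * (max b 0 * u (i + 1) + min b 0 * u i)
            + y i * (max b 0 * u (i - 1) + min b 0 * u i)) * u i) ≥ 0 := by
    rcases le_or_gt 0 b with hb | hb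
    · have hmax : max b 0 = b := max_eq_left hb
      have hmin : min b 0 = 0 := min_eq_right hb
      have heq : ∀ i ∈ Finset.Icc 1 N,
          (-(y (i + 1)) * (max b 0 * u (i + 1) + min b 0 * u i)
            + y i * (max b 0 * u (i - 1) + min b 0 * u i)) * u i
          = (fun j => -(y (j + 1)) * b * u (j + 1) * u j) i
            - (fun j => -(y (j + 1)) * b * u (j + 1) * u j) (i - 1) := by
        intro i hi
        obtain ⟨j, rfl⟩ : ∃ j, i = j + 1 := ⟨i - 1, by simp at hi; omega⟩
        simp only [Nat.add_sub_cancel, hmax, hmin]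
        ring
      rw [Finset.sum_congr rfl heq, tele_sum]
      simp [huN, hu0]
    · have hmax : max b 0 = 0 := max_eq_right hb.le
      have hmin : min b 0 = b := min_eq_left hb.le
      have heq : ∀ i ∈ Finset.Icc 1 N,
          (-(y (i + 1)) * (max b 0 * u (i + 1) + min b 0 * u i)
            + y i * (max b 0 * u (i - 1) + min b 0 * u i)) * u i
          = (-b) * ((y (i + 1) - y i) * (u i) ^ 2) := by
        intro i hi
        simp only [hmax, hmin]
        ring
      rw [Finset.sum_congr rfl heq]
      apply Finset.sum_nonneg
      intro i hi
      have := hmono i hi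
      exact mul_nonneg (by linarith) (mul_nonneg (by linarith) (sq_nonneg _))
  have h1 : min 1 c ≤ 1 := min_le_left _ _
  have h2 : min 1 c ≤ c := min_le_right _ _
  nlinarith [mul_le_mul_of_nonneg_right h1 hΩ, mul_le_mul_of_nonneg_right h2 hH]
end

section
/- Coercivity of the fitted-TPFA bilinear form: with $a=\tfrac12\sigma^2>0$, $b\in\mathbb{R}$ such that $a+b\ge 0$ or general $b$ with the upwind splitting, positive transmissibilities $\tau_{i+1/2}$, $c>0$, and $u_{N+1}=0$, the fitted bilinear form $b_h(u,u)=b_h^1(u,u)+b_h^2(u,u)+c\sum_{i=1}^N l_i u_i^2$, where $b_h^1(u,u)=\sum_{i=1}^N\tau_{i+1/2}(u_{i+1}-u_i)^2$ after summation by parts (the fitted scheme omits the flux into the degenerate cell) and $b_h^2(u,u)=\tfrac14 x_1(a+b)u_1^2 + \sum_{i=1}^N x_{i+1/2} b^-(u_{i+1}^2-u_i^2)$, satisfies $b_h(u,u)\ge \gamma(\|u\|_{0,\omega}^2+\|u\|_{0,h}^2)$ with $\gamma=\min(1,c)$. -/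
open Finset

lemma abel_aux (xm v : ℕ → ℝ) (M : ℕ) :
    ∑ i ∈ Finset.Icc 1 (M + 1), xm i * (v (i + 1) - v i)
      = xm (M + 1) * v (M + 2) - xm 0 * v 1
        - ∑ i ∈ Finset.Icc 1 (M + 1), (xm i - xm (i - 1)) * v i := by
  induction M with
  | zero => simp; ring
  | succ m ih =>
      rw [Finset.sum_Icc_succ_top (by omega : 1 ≤ m + 1 + 1),
          Finset.sum_Icc_succ_top (by omega : 1 ≤ m + 1 + 1), ih]
      simp only [Nat.add_sub_cancel]
      ring

/-- Coercivity of the fitted-TPFA bilinear form.  Here `a = σ²/2 > 0`, `b ∈ ℝ` with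
upwind splitting `b⁻ = min b 0`, `τ i` denotes the positive transmissibility
`τ_{i+1/2}`, `c > 0`, `l i > 0` are the dual cell lengths, `xm i` denotes the interface
point `x_{i+1/2}` (so `xm 1 = x_{3/2} ≥ x1/4`, where `x1` is the first interior node),
and `u (N+1) = 0`.  The fitted bilinear form
`b_h(u,u) = b_h¹(u,u) + b_h²(u,u) + c ∑ l_i u_i²`, with
`b_h¹(u,u) = ∑_{i=1}^N τ_{i+1/2}(u_{i+1}-u_i)²` (after summation by parts) and
`b_h²(u,u) = (1/4) x1 (a+b) u₁² + ∑_{i=1}^N x_{i+1/2} b⁻ (u_{i+1}² - u_i²)`,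
satisfies `b_h(u,u) ≥ min(1,c)(‖u‖₀ω² + ‖u‖₀h²)`. -/
theorem fitted_tpfa_full_coercivity
    (N : ℕ) (a b c x1 : ℝ) (ha : 0 < a) (hc : 0 < c) (hx1 : 0 < x1)
    (u τ l xm : ℕ → ℝ)
    (hτpos : ∀ i ∈ Finset.Icc 1 N, 0 < τ i)
    (hlpos : ∀ i ∈ Finset.Icc 1 N, 0 < l i)
    (hxmpos : ∀ i ∈ Finset.Icc 1 N, 0 < xm i)
    (hxmmono : ∀ i ∈ Finset.Icc 1 N, xm i < xm (i + 1))
    (hx32 : x1 / 4 ≤ xm 1) (hx1lt : x1 < xm 1)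
    (hxm0 : xm 0 = x1 / 2)
    (hl : ∀ i ∈ Finset.Icc 1 N, l i = xm i - xm (i - 1))
    (huN : u (N + 1) = 0) :
    (∑ i ∈ Finset.Icc 1 N, τ i * (u (i + 1) - u i) ^ 2)
      + ((1 / 4) * x1 * (a + b) * (u 1) ^ 2
          + ∑ i ∈ Finset.Icc 1 N, xm i * min b 0 * ((u (i + 1)) ^ 2 - (u i) ^ 2))
      + c * ∑ i ∈ Finset.Icc 1 N, l i * (u i) ^ 2
    ≥ min 1 c *
        ((∑ i ∈ Finset.Icc 1 N, τ i * (u (i + 1) - u i) ^ 2)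
          + ∑ i ∈ Finset.Icc 1 N, l i * (u i) ^ 2) := by
  have hS1 : 0 ≤ ∑ i ∈ Finset.Icc 1 N, τ i * (u (i + 1) - u i) ^ 2 :=
    Finset.sum_nonneg fun i hi => mul_nonneg (hτpos i hi).le (sq_nonneg _)
  have hS2 : 0 ≤ ∑ i ∈ Finset.Icc 1 N, l i * (u i) ^ 2 :=
    Finset.sum_nonneg fun i hi => mul_nonneg (hlpos i hi).le (sq_nonneg _)
  have hmb : min b 0 ≤ 0 := min_le_right _ _
  -- B2 nonneg
  have hB2 : 0 ≤ (1 / 4) * x1 * (a + b) * (u 1) ^ 2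
      + ∑ i ∈ Finset.Icc 1 N, xm i * min b 0 * ((u (i + 1)) ^ 2 - (u i) ^ 2) := by
    rcases N with _ | M
    · have : u 1 = 0 := huN
      simp [this]
    · have key : ∑ i ∈ Finset.Icc 1 (M + 1), xm i * min b 0 * ((u (i + 1)) ^ 2 - (u i) ^ 2)
          = min b 0 * (xm (M + 1) * u (M + 2) ^ 2 - xm 0 * u 1 ^ 2
              - ∑ i ∈ Finset.Icc 1 (M + 1), (xm i - xm (i - 1)) * u i ^ 2) := by
        rw [← abel_aux xm (fun i => u i ^ 2) M, Finset.mul_sum]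
        exact Finset.sum_congr rfl fun i _ => by ring
      have hsum : ∑ i ∈ Finset.Icc 1 (M + 1), (xm i - xm (i - 1)) * u i ^ 2
          = ∑ i ∈ Finset.Icc 1 (M + 1), l i * u i ^ 2 :=
        Finset.sum_congr rfl fun i hi => by rw [← hl i hi]
      rw [key, hsum, huN, hxm0]
      have hcoef : 0 ≤ (1 / 4) * x1 * (a + b) - min b 0 * (x1 / 2) := by
        rcases le_or_gt b 0 with hb | hb
        · rw [min_eq_left hb]; nlinarith
        · rw [min_eq_right hb.le]; nlinarith
      have hS2' : 0 ≤ ∑ i ∈ Finset.Icc 1 (M + 1), l i * u i ^ 2 :=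
        Finset.sum_nonneg fun i hi => mul_nonneg (hlpos i hi).le (sq_nonneg _)
      nlinarith [sq_nonneg (u 1), mul_nonneg (neg_nonneg.2 hmb) hS2']
  have h1 : min 1 c ≤ 1 := min_le_left _ _
  have h2 : min 1 c ≤ c := min_le_right _ _
  nlinarith [mul_le_mul_of_nonneg_right h1 hS1, mul_le_mul_of_nonneg_right h2 hS2]
end
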